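/- arXiv:2509.26341 — 3 statements merged into one kernel-verified Lean document; each statement's English description precedes it below -/
import Mathlib

section
/- If an L∞[1] R-algebra (L, d_L, q_2, q_3, ...) is R-linearizable (i.e., isomorphic as an L∞[1] R-algebra to the abelian L∞[1] R-algebra (L, d_L, 0, 0, ...)), then the cohomology class [q_2] of the binary bracket vanishes in H^1(Hom_R(L^{⊙_R 2}, L), d_L). -/
open scoped Classical TensorProduct

namespace Paper

noncomputable section
/-- `(-1)^i` for an integer `i`. -/
def sgn (i : ℤ) : ℤ := (-1) ^ i.natAbs

/-- The Koszul sign of a permutation `σ` acting on homogeneous elements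
of degrees `deg`. -/
def koszulSign {n : ℕ} (deg : Fin n → ℤ) (σ : Equiv.Perm (Fin n)) : ℤ :=
  ∏ p ∈ Finset.univ.filter (fun p : Fin n × Fin n => p.1 < p.2 ∧ σ p.2 < σ p.1),
    sgn (deg p.1 * deg p.2)

/-- `σ` is an `(i, n-i)`-unshuffle: it is increasing on the first `i`
positions and on the last `n - i` positions. -/
def IsUnshuffle (n i : ℕ) (σ : Equiv.Perm (Fin n)) : Prop :=
  ∀ a b : Fin n, a < b → (b.1 < i ∨ i ≤ a.1) → σ a < σ b

/-- `σ` is a multi-unshuffle with respect to the composition `c` of `n`: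
it is increasing on each block of `c`. -/
def IsMultiUnshuffle {n : ℕ} (c : Composition n) (σ : Equiv.Perm (Fin n)) : Prop :=
  ∀ a b : Fin n, a < b → c.index a = c.index b → σ a < σ b

/-- Iterated bracketing `[⋯[[z, y₀], y₁]⋯, y_{k-1}]`. -/
def iterBr {M : Type} (br : M → M → M) : (k : ℕ) → M → (Fin k → M) → M
  | 0, z, _ => z
  | k + 1, z, y => iterBr br k (br z (y 0)) (fun j => y j.succ)

section Defs

variable (K : Type) [Field K] (A : Type) [CommRing A] [Algebra K A]
variable (L : Type) [AddCommGroup L] [Module K L] [Module A L]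
variable (M : Type) [AddCommGroup M] [Module K M] [Module A M]

/-- `(A, 𝒜, dA)` is a unital differential graded-commutative algebra over `K`. -/
structure IsDGCA (𝒜 : ℤ → Submodule K A) (dA : A →ₗ[K] A) : Prop where
  isInternal : DirectSum.IsInternal 𝒜
  one_mem : (1 : A) ∈ 𝒜 0
  mul_mem : ∀ i j : ℤ, ∀ a b : A, a ∈ 𝒜 i → b ∈ 𝒜 j → a * b ∈ 𝒜 (i + j)
  mul_comm' : ∀ i j : ℤ, ∀ a b : A, a ∈ 𝒜 i → b ∈ 𝒜 j → a * b = sgn (i * j) • (b * a)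
  d_mem : ∀ i : ℤ, ∀ a ∈ 𝒜 i, dA a ∈ 𝒜 (i + 1)
  d_sq : ∀ a, dA (dA a) = 0
  leibniz : ∀ i : ℤ, ∀ a ∈ 𝒜 i, ∀ b, dA (a * b) = dA a * b + sgn i • (a * dA b)

/-- `(L, ℒ, dL)` is a DG module over the DGCA `(A, 𝒜, dA)`. -/
structure IsDGModule (𝒜 : ℤ → Submodule K A) (dA : A →ₗ[K] A)
    (ℒ : ℤ → Submodule K L) (dL : L →ₗ[K] L) : Prop where
  isInternal : DirectSum.IsInternal ℒ
  smul_mem : ∀ i j : ℤ, ∀ (a : A) (x : L), a ∈ 𝒜 i → x ∈ ℒ j → a • x ∈ ℒ (i + j)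
  d_mem : ∀ j : ℤ, ∀ x ∈ ℒ j, dL x ∈ ℒ (j + 1)
  d_sq : ∀ x, dL (dL x) = 0
  leibniz : ∀ i : ℤ, ∀ a ∈ 𝒜 i, ∀ x : L, dL (a • x) = dA a • x + sgn i • (a • dL x)

/-- A graded symmetric, graded `A`-multilinear map of degree `dg`. -/
structure IsGSMap (𝒜 : ℤ → Submodule K A) (ℒ : ℤ → Submodule K L)
    (ℳ : ℤ → Submodule K M) (dg : ℤ) (n : ℕ)
    (q : MultilinearMap K (fun _ : Fin n => L) M) : Prop where
  degree : ∀ (deg : Fin n → ℤ) (x : Fin n → L), (∀ k, x k ∈ ℒ (deg k)) →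
    q x ∈ ℳ ((∑ k, deg k) + dg)
  symm : ∀ (deg : Fin n → ℤ) (x : Fin n → L), (∀ k, x k ∈ ℒ (deg k)) →
    ∀ σ : Equiv.Perm (Fin n), q (x ∘ σ) = koszulSign deg σ • q x
  smul : ∀ (hn : 0 < n) (i : ℤ), ∀ a ∈ 𝒜 i, ∀ x : Fin n → L,
    q (Function.update x ⟨0, hn⟩ (a • x ⟨0, hn⟩)) = sgn (i * dg) • (a • q x)

/-- The sum `Σ_{i} Σ_{σ ∈ Sh(i, n-i)} ± outer_{n-i+1}(inner_i(x_{σ(1)},…), x_{σ(i+1)},…)`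
appearing in the `L∞[1]` identities (with Koszul signs w.r.t. degrees `deg`). -/
def insComp (outer : ∀ k : ℕ, MultilinearMap K (fun _ : Fin k => L) M)
    (inner : ∀ k : ℕ, MultilinearMap K (fun _ : Fin k => L) L)
    (n : ℕ) (deg : Fin n → ℤ) (x : Fin n → L) : M :=
  ∑ i : Fin (n + 1),
    ∑ σ ∈ Finset.univ.filter (fun σ : Equiv.Perm (Fin n) => IsUnshuffle n i.1 σ),
      koszulSign deg σ •
        outer (n - i.1 + 1)
          (Fin.cons
            (inner i.1 (fun k => x (σ (Fin.castLE (Nat.lt_succ_iff.mp i.isLt) k))))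
            (fun k => x (σ ⟨i.1 + k.1, by
              have h1 := i.isLt
              have h2 := k.isLt
              omega⟩)))

/-- The family of operations whose only nonzero component is the unary one, `d`. -/
def fam1 (d : L →ₗ[K] L) : ∀ n, MultilinearMap K (fun _ : Fin n => L) L
  | 1 => MultilinearMap.ofSubsingleton K L L (0 : Fin 1) d
  | _ => 0

/-- The family of operations whose only nonzero component is the `0`-ary one,
with value `x`. -/
def fam0 (x : L) : ∀ n, MultilinearMap K (fun _ : Fin n => L) L
  | 0 => MultilinearMap.constOfIsEmpty K (fun _ : Fin 0 => L) x
  | _ + 1 => 0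

/-- The generalized Jacobi identities of an `L∞[1]` algebra (on homogeneous elements). -/
def LInftyIdentity (ℒ : ℤ → Submodule K L)
    (q : ∀ k, MultilinearMap K (fun _ : Fin k => L) L) : Prop :=
  ∀ (n : ℕ) (deg : Fin n → ℤ) (x : Fin n → L), 1 ≤ n → (∀ k, x k ∈ ℒ (deg k)) →
    insComp K L L q q n deg x = 0

/-- An `L∞[1]` `R`-algebra structure (with `R = (A, 𝒜, dA)`) on the DG module
`(L, ℒ, dL)`; `q 1 = dL` and the higher brackets are graded symmetric graded
`A`-multilinear maps of degree 1 satisfying the generalized Jacobi identities. -/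
structure IsLInftyAlg (𝒜 : ℤ → Submodule K A) (dA : A →ₗ[K] A)
    (ℒ : ℤ → Submodule K L) (dL : L →ₗ[K] L)
    (q : ∀ k, MultilinearMap K (fun _ : Fin k => L) L) : Prop where
  dgca : IsDGCA K A 𝒜 dA
  dgmod : IsDGModule K A L 𝒜 dA ℒ dL
  q_zero : q 0 = 0
  q_one : ∀ x : L, q 1 (fun _ => x) = dL x
  gs : ∀ n, 2 ≤ n → IsGSMap K A L L 𝒜 ℒ ℒ 1 n (q n)
  jacobi : LInftyIdentity K L ℒ q

/-- `f` is a quasi-isomorphism of cochain complexes. -/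
structure IsQuasiIso (dL : L →ₗ[K] L) (dM : M →ₗ[K] M) (f : L →ₗ[K] M) : Prop where
  cochain : ∀ x, f (dL x) = dM (f x)
  surj : ∀ y : M, dM y = 0 → ∃ x z, dL x = 0 ∧ y = f x + dM z
  inj : ∀ x : L, dL x = 0 → (∃ z, f x = dM z) → ∃ w, x = dL w

/-- The sum over compositions `i₁ + ⋯ + i_k = n` (with `lo ≤ k`) and multi-unshuffles
`Σ (1/k!) Σ_σ ± post (outer_k (inner_{i₁}(x_{σ(1)},…), …, inner_{i_k}(…, x_{σ(n)})))`. -/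
def treeSum {X Y W Z : Type} [AddCommGroup X] [Module K X] [AddCommGroup Y] [Module K Y]
    [AddCommGroup W] [Module K W] [AddCommGroup Z] [Module K Z]
    (outer : ∀ k : ℕ, MultilinearMap K (fun _ : Fin k => Y) W)
    (inner : ∀ m : ℕ, MultilinearMap K (fun _ : Fin m => X) Y)
    (post : W →ₗ[K] Z) (lo : ℕ) (n : ℕ) (deg : Fin n → ℤ) (x : Fin n → X) : Z :=
  ∑ c : Composition n,
    if lo ≤ c.length then
      ∑ σ ∈ Finset.univ.filter (fun σ : Equiv.Perm (Fin n) => IsMultiUnshuffle c σ),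
        ((c.length).factorial : K)⁻¹ •
          (koszulSign deg σ •
            post (outer c.length
              (fun m => inner (c.blocksFun m) (fun t => x (σ (c.embedding m t))))))
    else 0

/-- `f = (f₁, f₂, …)` is an `L∞[1]` `R`-morphism from `(L, qL)` to `(M, qM)`. -/
structure IsLInftyMorph (𝒜 : ℤ → Submodule K A)
    (ℒ : ℤ → Submodule K L) (ℳ : ℤ → Submodule K M)
    (qL : ∀ k, MultilinearMap K (fun _ : Fin k => L) L)
    (qM : ∀ k, MultilinearMap K (fun _ : Fin k => M) M)
    (f : ∀ m, MultilinearMap K (fun _ : Fin m => L) M) : Prop where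
  f_zero : f 0 = 0
  gs : ∀ n, 1 ≤ n → IsGSMap K A L M 𝒜 ℒ ℳ 0 n (f n)
  identity : ∀ (n : ℕ) (deg : Fin n → ℤ) (x : Fin n → L), 1 ≤ n →
    (∀ k, x k ∈ ℒ (deg k)) →
    treeSum K qM f (LinearMap.id : M →ₗ[K] M) 1 n deg x = insComp K L M f qL n deg x

/-- The composition of two `L∞[1]`-morphism coefficient families, evaluated on a
homogeneous tuple. -/
def compFam {N : Type} [AddCommGroup N] [Module K N]
    (outer : ∀ k, MultilinearMap K (fun _ : Fin k => M) N)
    (inner : ∀ m, MultilinearMap K (fun _ : Fin m => L) M)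
    (n : ℕ) (deg : Fin n → ℤ) (x : Fin n → L) : N :=
  treeSum K outer inner (LinearMap.id : N →ₗ[K] N) 1 n deg x

/-- `f` is an `L∞[1]` `R`-isomorphism: it admits a two-sided inverse morphism. -/
def IsLInftyIso (𝒜 : ℤ → Submodule K A)
    (ℒ : ℤ → Submodule K L) (ℳ : ℤ → Submodule K M)
    (qL : ∀ k, MultilinearMap K (fun _ : Fin k => L) L)
    (qM : ∀ k, MultilinearMap K (fun _ : Fin k => M) M)
    (f : ∀ m, MultilinearMap K (fun _ : Fin m => L) M) : Prop :=
  IsLInftyMorph K A L M 𝒜 ℒ ℳ qL qM f ∧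
  ∃ g : ∀ m, MultilinearMap K (fun _ : Fin m => M) L,
    IsLInftyMorph K A M L 𝒜 ℳ ℒ qM qL g ∧
    (∀ (n : ℕ) (deg : Fin n → ℤ) (x : Fin n → L), 1 ≤ n → (∀ k, x k ∈ ℒ (deg k)) →
      compFam K L M g f n deg x = fam1 K L (LinearMap.id : L →ₗ[K] L) n x) ∧
    (∀ (n : ℕ) (deg : Fin n → ℤ) (y : Fin n → M), 1 ≤ n → (∀ k, y k ∈ ℳ (deg k)) →
      compFam K M L f g n deg y = fam1 K M (LinearMap.id : M →ₗ[K] M) n y)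

/-- A DG Lie algebra over the DGCA `(A, 𝒜, dA)`: a DG `A`-module with an
`A`-bilinear graded Lie bracket compatible with the differential. -/
structure IsDGLie (𝒜 : ℤ → Submodule K A) (dA : A →ₗ[K] A)
    (ℒ : ℤ → Submodule K L) (D : L →ₗ[K] L) (br : L →ₗ[K] L →ₗ[K] L) : Prop where
  dgmod : IsDGModule K A L 𝒜 dA ℒ D
  br_mem : ∀ i j : ℤ, ∀ x y : L, x ∈ ℒ i → y ∈ ℒ j → br x y ∈ ℒ (i + j)
  skew : ∀ i j : ℤ, ∀ x y : L, x ∈ ℒ i → y ∈ ℒ j → br x y = (- sgn (i * j)) • br y x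
  jacobi : ∀ i j : ℤ, ∀ x y z : L, x ∈ ℒ i → y ∈ ℒ j →
    br x (br y z) = br (br x y) z + sgn (i * j) • br y (br x z)
  leibniz : ∀ i : ℤ, ∀ x ∈ ℒ i, ∀ y, D (br x y) = br (D x) y + sgn i • br x (D y)
  smul_br : ∀ (a : A) (x y : L), br (a • x) y = a • br x y

end Defs

/-!
Let `f` be an `L∞[1]` isomorphism from `(L, q)` to `(L, d_L, 0, 0, …)` with inverse `g`.
In arity one, the morphism identities say that `f₁` and `g₁` are chain maps, and `g ∘ f = id`
gives `g₁ ∘ f₁ = id`. In arity two, the morphism identity for `f` reads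
`d_L ∘ f₂ = f₂ ∘ (d_L ⊗ 1 + 1 ⊗ d_L) + f₁ ∘ q₂`, so applying `g₁` exhibits `q₂` as the coboundary
of the degree-`0` graded symmetric map `g₁ ∘ f₂`.
-/

lemma sgn_eq_negOnePow (i : ℤ) : sgn i = i.negOnePow := by
  rw [sgn, ← Int.coe_negOnePow_natCast, Int.natCast_natAbs, Int.negOnePow_abs]

lemma sgn_mul_mul_add_one (i j : ℤ) : sgn (i * j) * sgn (i * (j + 1)) = sgn i := by
  simp only [sgn_eq_negOnePow, ← Units.val_mul, ← Int.negOnePow_add]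
  rw [show i * j + i * (j + 1) = 2 * (i * j) + i by ring, Int.negOnePow_add,
    Int.negOnePow_two_mul, one_mul]

lemma koszulSign_one {n : ℕ} (deg : Fin n → ℤ) : koszulSign deg 1 = 1 := by
  refine Finset.prod_eq_one fun p hp => ?_
  obtain ⟨hlt, hgt⟩ := (Finset.mem_filter.mp hp).2
  exact absurd hlt (lt_asymm hgt)

lemma koszulSign_swap (deg : Fin 2 → ℤ) :
    koszulSign deg (Equiv.swap 0 1) = sgn (deg 0 * deg 1) := by
  have h : Finset.univ.filter (fun p : Fin 2 × Fin 2 =>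
      p.1 < p.2 ∧ Equiv.swap 0 1 p.2 < Equiv.swap 0 1 p.1) = {(0, 1)} := by
    decide
  rw [koszulSign, h, Finset.prod_singleton]

lemma perm_eq_one_of_strictMono {n : ℕ} {σ : Equiv.Perm (Fin n)} (hσ : StrictMono σ) :
    σ = 1 :=
  Equiv.ext fun _ => hσ.apply_eq

lemma isUnshuffle_self_iff {n : ℕ} {σ : Equiv.Perm (Fin n)} : IsUnshuffle n n σ ↔ σ = 1 :=
  ⟨fun h => perm_eq_one_of_strictMono fun a b hab => h a b hab (Or.inl b.2),
    fun h _ _ hab _ => h ▸ hab⟩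

lemma index_single {n : ℕ} (hn : 0 < n) (a b : Fin n) :
    (Composition.single n hn).index a = (Composition.single n hn).index b := by
  have ha := ((Composition.single n hn).index a).2
  have hb := ((Composition.single n hn).index b).2
  simp only [Composition.single_length] at ha hb
  exact Fin.ext (by omega)

lemma isMultiUnshuffle_single_iff {n : ℕ} (hn : 0 < n) {σ : Equiv.Perm (Fin n)} :
    IsMultiUnshuffle (Composition.single n hn) σ ↔ σ = 1 :=
  ⟨fun h => perm_eq_one_of_strictMono fun a b hab => h a b hab (index_single hn a b),
    fun h _ _ hab _ => h ▸ hab⟩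

section Evaluation

variable (K : Type) [Field K]

lemma fam1_of_ne_one {L : Type} [AddCommGroup L] [Module K L] (d : L →ₗ[K] L) {k : ℕ}
    (hk : k ≠ 1) : fam1 K L d k = 0 := by
  match k, hk with
  | 0, _ => rfl
  | k + 2, _ => rfl

lemma treeSum_eq_of_outer_eq_zero {X Y W Z : Type} [AddCommGroup X] [Module K X]
    [AddCommGroup Y] [Module K Y] [AddCommGroup W] [Module K W] [AddCommGroup Z] [Module K Z]
    (outer : ∀ k : ℕ, MultilinearMap K (fun _ : Fin k => Y) W)
    (inner : ∀ m : ℕ, MultilinearMap K (fun _ : Fin m => X) Y)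
    (post : W →ₗ[K] Z) {lo n : ℕ} (hlo : lo ≤ 1) (hn : 0 < n)
    (hout : ∀ k, 1 < k → k ≤ n → outer k = 0) (deg : Fin n → ℤ) (x : Fin n → X) :
    treeSum K outer inner post lo n deg x = post (outer 1 (fun _ => inner n x)) := by
  unfold treeSum
  rw [Fintype.sum_eq_single (Composition.single n hn)]
  · have hσ : Finset.univ.filter (IsMultiUnshuffle (Composition.single n hn)) = {1} := by
      ext σ
      simp [isMultiUnshuffle_single_iff]
    rw [if_pos (by simpa using hlo), hσ, Finset.sum_singleton, koszulSign_one, one_smul]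
    simp only [Composition.single_length, Nat.factorial_one, Nat.cast_one, inv_one, one_smul,
      Equiv.Perm.one_apply]
    congr 2
    funext m
    obtain rfl : m = 0 := Subsingleton.elim m 0
    exact congrArg (inner n) (funext fun t => congrArg x (Composition.single_embedding hn t))
  · intro c hc
    have hlen : 1 < c.length := by
      have := c.length_pos_of_pos hn
      have := (Composition.eq_single_iff_length hn).not.mp hc
      omega
    rw [hout _ hlen c.length_le]
    simp

lemma insComp_one {L M : Type} [AddCommGroup L] [Module K L] [AddCommGroup M] [Module K M]
    (F : ∀ k : ℕ, MultilinearMap K (fun _ : Fin k => L) M)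
    (Q : ∀ k : ℕ, MultilinearMap K (fun _ : Fin k => L) L)
    (hQ : Q 0 = 0) (deg : Fin 1 → ℤ) (x : Fin 1 → L) :
    insComp K L M F Q 1 deg x = F 1 (fun _ => Q 1 x) := by
  have hσ : Finset.univ.filter (fun σ : Equiv.Perm (Fin 1) => IsUnshuffle 1 1 σ) = {1} := by
    ext σ
    simp [isUnshuffle_self_iff]
  rw [insComp, Fin.sum_univ_two]
  simp only [Fin.val_zero, Fin.val_one, hQ, zero_apply, hσ, Finset.sum_singleton,
    koszulSign_one, one_smul]
  rw [Finset.sum_eq_zero fun σ _ => by rw [MultilinearMap.map_coord_zero _ 0 (Fin.cons_zero _ _),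
    smul_zero], zero_add]
  refine congrArg (F 1) (funext fun j => ?_)
  rw [Fin.fin_one_eq_zero j, Fin.cons_zero]
  exact congrArg (Q 1) (funext fun k => congrArg x (Subsingleton.elim _ _))

lemma insComp_two {L M : Type} [AddCommGroup L] [Module K L] [AddCommGroup M] [Module K M]
    (F : ∀ k : ℕ, MultilinearMap K (fun _ : Fin k => L) M)
    (Q : ∀ k : ℕ, MultilinearMap K (fun _ : Fin k => L) L)
    (hQ : Q 0 = 0) (deg : Fin 2 → ℤ) (x : Fin 2 → L) :
    insComp K L M F Q 2 deg x = F 2 ![Q 1 (fun _ => x 0), x 1]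
      + sgn (deg 0 * deg 1) • F 2 ![Q 1 (fun _ => x 1), x 0] + F 1 (fun _ => Q 2 x) := by
  have hσ₁ : Finset.univ.filter (fun σ : Equiv.Perm (Fin 2) => IsUnshuffle 2 1 σ)
      = {1, Equiv.swap 0 1} := by
    rw [Finset.filter_true_of_mem fun σ _ a b hab hor => absurd hor (by
      have : a.1 < b.1 := hab
      omega)]
    decide
  have hσ₂ : Finset.univ.filter (fun σ : Equiv.Perm (Fin 2) => IsUnshuffle 2 2 σ) = {1} := by
    ext σ
    simp [isUnshuffle_self_iff]
  rw [insComp, Fin.sum_univ_three]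
  simp only [Fin.val_zero, Fin.val_one, Fin.val_two, hQ, zero_apply]
  rw [Finset.sum_eq_zero fun σ _ => by rw [MultilinearMap.map_coord_zero _ 0 (Fin.cons_zero _ _),
    smul_zero], zero_add]
  rw [hσ₁, hσ₂, Finset.sum_pair (by decide), Finset.sum_singleton, koszulSign_one,
    koszulSign_swap]
  simp only [one_smul]
  refine congr_arg₂ (· + ·) (congr_arg₂ (· + ·) ?_ (congrArg _ ?_)) ?_ <;>
    refine congrArg (F _) (funext fun j => ?_) <;> fin_cases j <;> simp [Fin.fin_one_eq_zero]

lemma fam1_one_apply {L : Type} [AddCommGroup L] [Module K L] (d : L →ₗ[K] L) (v : Fin 1 → L) :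
    fam1 K L d 1 v = d (v 0) :=
  rfl

end Evaluation

section Morphisms

variable {K : Type} [Field K] {A : Type} [CommRing A] [Algebra K A]
variable {L : Type} [AddCommGroup L] [Module K L] [Module A L]
variable {M : Type} [AddCommGroup M] [Module K M] [Module A M]
variable {N : Type} [AddCommGroup N] [Module K N] [Module A N]
variable {𝒜 : ℤ → Submodule K A} {ℒ : ℤ → Submodule K L} {ℳ : ℤ → Submodule K M}
  {𝒩 : ℤ → Submodule K N}

lemma IsGSMap.apply_mem_two {dg : ℤ} {q : MultilinearMap K (fun _ : Fin 2 => L) M}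
    (hq : IsGSMap K A L M 𝒜 ℒ ℳ dg 2 q) {i j : ℤ} {x y : L} (hx : x ∈ ℒ i) (hy : y ∈ ℒ j) :
    q ![x, y] ∈ ℳ (i + j + dg) := by
  simpa using hq.degree ![i, j] ![x, y] (Fin.forall_fin_two.mpr ⟨hx, hy⟩)

lemma IsGSMap.apply_swap {dg : ℤ} {q : MultilinearMap K (fun _ : Fin 2 => L) M}
    (hq : IsGSMap K A L M 𝒜 ℒ ℳ dg 2 q) {i j : ℤ} {x y : L} (hx : x ∈ ℒ i) (hy : y ∈ ℒ j) :
    q ![y, x] = sgn (i * j) • q ![x, y] := by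
  have h := hq.symm ![i, j] ![x, y] (Fin.forall_fin_two.mpr ⟨hx, hy⟩) (Equiv.swap 0 1)
  rwa [koszulSign_swap, show ![x, y] ∘ Equiv.swap 0 1 = ![y, x] by
    ext k; fin_cases k <;> rfl] at h

lemma IsGSMap.linearMap_comp {dg : ℤ} {n : ℕ} {g : MultilinearMap K (fun _ : Fin 1 => M) N}
    {f : MultilinearMap K (fun _ : Fin n => L) M} (hg : IsGSMap K A M N 𝒜 ℳ 𝒩 0 1 g)
    (hf : IsGSMap K A L M 𝒜 ℒ ℳ dg n f) :
    IsGSMap K A L N 𝒜 ℒ 𝒩 dg n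
      (((MultilinearMap.ofSubsingleton K M N 0).symm g).compMultilinearMap f) where
  degree deg x hx := by
    simpa using hg.degree _ (fun _ => f x) fun _ => hf.degree deg x hx
  symm deg x hx σ := by
    simp only [LinearMap.compMultilinearMap_apply, hf.symm deg x hx σ, map_zsmul]
  smul hn i a ha x := by
    have hga := hg.smul Nat.one_pos i a ha (fun _ => f x)
    simp only [Function.update_eq_const_of_subsingleton, mul_zero, sgn, Int.natAbs_zero,
      pow_zero, one_smul] at hga
    simp only [LinearMap.compMultilinearMap_apply, hf.smul hn i a ha x, map_zsmul]
    exact congrArg (sgn (i * dg) • ·) hga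

lemma IsLInftyMorph.map_unary_comm {qL : ∀ k, MultilinearMap K (fun _ : Fin k => L) L}
    {qM : ∀ k, MultilinearMap K (fun _ : Fin k => M) M}
    {f : ∀ m, MultilinearMap K (fun _ : Fin m => L) M}
    (hf : IsLInftyMorph K A L M 𝒜 ℒ ℳ qL qM f) (hqL : qL 0 = 0) {j : ℤ} {z : L} (hz : z ∈ ℒ j) :
    qM 1 (fun _ => f 1 (fun _ => z)) = f 1 (fun _ => qL 1 (fun _ => z)) := by
  have h := hf.identity 1 (fun _ => j) (fun _ => z) le_rfl fun _ => hz
  rwa [treeSum_eq_of_outer_eq_zero K _ _ _ le_rfl Nat.one_pos (fun _ _ _ => by omega),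
    insComp_one K _ _ hqL] at h

lemma IsLInftyMorph.binary_identity {qL : ∀ k, MultilinearMap K (fun _ : Fin k => L) L}
    {dM : M →ₗ[K] M} {f : ∀ m, MultilinearMap K (fun _ : Fin m => L) M}
    (hf : IsLInftyMorph K A L M 𝒜 ℒ ℳ qL (fam1 K M dM) f) (hqL : qL 0 = 0) {i j : ℤ} {x y : L}
    (hx : x ∈ ℒ i) (hy : y ∈ ℒ j) :
    dM (f 2 ![x, y]) = f 2 ![qL 1 (fun _ => x), y] + sgn (i * j) • f 2 ![qL 1 (fun _ => y), x]
      + f 1 (fun _ => qL 2 ![x, y]) := by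
  have h := hf.identity 2 ![i, j] ![x, y] one_le_two (Fin.forall_fin_two.mpr ⟨hx, hy⟩)
  rwa [treeSum_eq_of_outer_eq_zero K _ _ _ le_rfl two_pos
    (fun k hk _ => fam1_of_ne_one K dM hk.ne'), insComp_two K _ _ hqL] at h

end Morphisms

/-- If an `L∞[1]` `R`-algebra `(L, d_L, q₂, q₃, …)` is
`R`-linearizable (isomorphic as an `L∞[1]` `R`-algebra to `(L, d_L, 0, 0, …)`),
then `q₂` is a coboundary in `(Hom_R(L^{⊙2}, L), d_L)`, i.e. `[q₂] = 0` in `H¹`. -/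
theorem statement_3
    (K : Type) [Field K] (A : Type) [CommRing A] [Algebra K A]
    (L : Type) [AddCommGroup L] [Module K L] [Module A L]
    (𝒜 : ℤ → Submodule K A) (dA : A →ₗ[K] A)
    (ℒ : ℤ → Submodule K L) (dL : L →ₗ[K] L)
    (q : ∀ k, MultilinearMap K (fun _ : Fin k => L) L)
    (h : IsLInftyAlg K A L 𝒜 dA ℒ dL q)
    (hlin : ∃ f, IsLInftyIso K A L L 𝒜 ℒ ℒ q (fam1 K L dL) f) :
    ∃ g : MultilinearMap K (fun _ : Fin 2 => L) L,
      IsGSMap K A L L 𝒜 ℒ ℒ 0 2 g ∧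
      ∀ (i j : ℤ) (x y : L), x ∈ ℒ i → y ∈ ℒ j →
        q 2 ![x, y] = dL (g ![x, y]) - (g ![dL x, y] + sgn i • g ![x, dL y]) := by
  obtain ⟨f, hf, g, hg, hgf, -⟩ := hlin
  set g₁ : L →ₗ[K] L := (MultilinearMap.ofSubsingleton K L L 0).symm (g 1)
  have hg₁_comm {j : ℤ} {z : L} (hz : z ∈ ℒ j) : dL (g₁ z) = g₁ (dL z) := by
    have := hg.map_unary_comm rfl hz
    rwa [h.q_one, fam1_one_apply] at this
  have hg₁_inv {j : ℤ} {z : L} (hz : z ∈ ℒ j) : g₁ (f 1 (fun _ => z)) = z := by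
    have := hgf 1 (fun _ => j) (fun _ => z) le_rfl fun _ => hz
    rwa [compFam, treeSum_eq_of_outer_eq_zero K _ _ _ le_rfl Nat.one_pos (fun _ _ _ => by omega)]
      at this
  have hG : IsGSMap K A L L 𝒜 ℒ ℒ 0 2 (g₁.compMultilinearMap (f 2)) :=
    (hg.gs 1 le_rfl).linearMap_comp (hf.gs 2 one_le_two)
  refine ⟨g₁.compMultilinearMap (f 2), hG, fun i j x y hx hy => ?_⟩
  have hbin := congrArg g₁ (hf.binary_identity h.q_zero hx hy)
  rw [h.q_one, h.q_one, map_add, map_add, map_zsmul,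
    ← hg₁_comm ((hf.gs 2 one_le_two).apply_mem_two hx hy),
    hg₁_inv ((h.gs 2 le_rfl).apply_mem_two hx hy)] at hbin
  have hswap := hG.apply_swap hx (h.dgmod.d_mem j y hy)
  simp only [LinearMap.compMultilinearMap_apply] at hswap ⊢
  rw [hbin, hswap, smul_smul, sgn_mul_mul_add_one]
  abel

end

end Paper
end

section
/- Let (M, D, [−,−]) be a DG Lie R-algebra, L ⊂ M a DG Lie R-subalgebra, regarded as a subcomplex, with quotient DG R-module A = M/L, projection π and an R-linear (not necessarily cochain) splitting σ : A → M of the quotient. Set P = σπ and P⊥ = id − σπ. Then the maps f(a) = (s⁻¹ P⊥ D σ(a), σ(a)), g(s⁻¹x, y) = π(y), h(s⁻¹x, y) = (s⁻¹ P⊥ y, 0) constitute an R-linear contraction of the DG R-module (C(i)[1], d_{C(i)[1]}) onto (A, d_A), where i : L ↪ M is the inclusion; i.e., f and g are cochain maps, gf = id_A, d h + h d = fg − id, and h² = gh = hf = 0. -/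
open scoped Classical TensorProduct

namespace Paper

noncomputable section
/-- For a DG Lie `R`-algebra `(M, D, [−,−])`, a DG Lie `R`-subalgebra
`N ⊆ M` and an `R`-linear (not necessarily cochain) splitting `σ` of the quotient
`A = M/N`, the maps `f(a) = (s⁻¹P^⊥Dσ(a), σ(a))`, `g(s⁻¹x, y) = π(y)`,
`h(s⁻¹x, y) = (s⁻¹P^⊥y, 0)` form an `R`-linear contraction of the cone
`(C(i)[1], d_{C(i)[1]})` onto `(M/N, d̄)`. -/
theorem statement_10
    (K : Type) [Field K] (A : Type) [CommRing A] [Algebra K A]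
    (M : Type) [AddCommGroup M] [Module K M] [Module A M] [IsScalarTower K A M]
    (𝒜 : ℤ → Submodule K A) (dA : A →ₗ[K] A) (hA : IsDGCA K A 𝒜 dA)
    (ℳ : ℤ → Submodule K M) (D : M →ₗ[K] M) (br : M →ₗ[K] M →ₗ[K] M)
    (hLie : IsDGLie K A M 𝒜 dA ℳ D br)
    (N : Submodule A M)
    (hDN : ∀ x ∈ N, D x ∈ N)
    (hbrN : ∀ x ∈ N, ∀ y ∈ N, br x y ∈ N)
    (σ : (M ⧸ N) →ₗ[A] M) (hσ : ∀ b, N.mkQ (σ b) = b)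
    (Dq : (M ⧸ N) →ₗ[K] (M ⧸ N)) (hDq : ∀ z : M, Dq (N.mkQ z) = N.mkQ (D z))
    (D' : N →ₗ[K] N) (hD' : ∀ x : N, (D' x : M) = D (x : M)) :
    ∃ (F : (M ⧸ N) →ₗ[K] N × M) (H : N × M →ₗ[K] N × M),
      (∀ b, ((F b).1 : M) = D (σ b) - σ (Dq b)) ∧ (∀ b, (F b).2 = σ b) ∧
      (∀ p : N × M, ((H p).1 : M) = p.2 - σ (N.mkQ p.2)) ∧ (∀ p : N × M, (H p).2 = 0) ∧
      (let dC : N × M →ₗ[K] N × M :=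
        ((-D') ∘ₗ LinearMap.fst K N M).prod
          ((D ∘ₗ LinearMap.snd K N M) - ((N.subtype.restrictScalars K) ∘ₗ LinearMap.fst K N M));
       (∀ b, dC (F b) = F (Dq b)) ∧
       (∀ p : N × M, N.mkQ ((dC p).2) = Dq (N.mkQ p.2)) ∧
       (∀ b, N.mkQ ((F b).2) = b) ∧
       (∀ p : N × M, dC (H p) + H (dC p) = F (N.mkQ p.2) - p) ∧
       (∀ p, H (H p) = 0) ∧ (∀ p : N × M, N.mkQ ((H p).2) = 0) ∧ (∀ b, H (F b) = 0) ∧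
       (∀ (i : ℤ), ∀ a ∈ 𝒜 i, ∀ b : M ⧸ N,
          F (a • b) = (sgn i • (a • (F b).1), a • (F b).2)) ∧
       (∀ (i : ℤ), ∀ a ∈ 𝒜 i, ∀ p : N × M,
          H (sgn i • (a • p.1), a • p.2)
            = sgn i • (sgn i • (a • (H p).1), a • (H p).2))) := by
  classical
  have sgn_sq : ∀ i : ℤ, sgn i * sgn i = 1 := by
    intro i
    simp [sgn, ← pow_add, pow_mul']
  have hker : ∀ x : N, N.mkQ (x : M) = 0 := by
    intro x
    simpa using (Submodule.Quotient.mk_eq_zero N).mpr x.2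
  have hmemF : ∀ b : M ⧸ N, D (σ b) - σ (Dq b) ∈ N := by
    intro b
    rw [← Submodule.Quotient.mk_eq_zero, ← Submodule.mkQ_apply, map_sub]
    have h1 : N.mkQ (D (σ b)) = Dq b := by
      rw [← hDq, hσ]
    rw [h1, hσ, sub_self]
  have hmemH : ∀ y : M, y - σ (N.mkQ y) ∈ N := by
    intro y
    rw [← Submodule.Quotient.mk_eq_zero, ← Submodule.mkQ_apply, map_sub, hσ, sub_self]
  set F : (M ⧸ N) →ₗ[K] N × M :=
    { toFun := fun b => (⟨D (σ b) - σ (Dq b), hmemF b⟩, σ b)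
      map_add' := by
        intro a b
        refine Prod.ext (Subtype.ext ?_) ?_ <;> simp [map_add] <;> abel
      map_smul' := by
        intro k b
        refine Prod.ext (Subtype.ext ?_) ?_ <;>
          simp [LinearMap.map_smul_of_tower, smul_sub] } with hFdef
  set H : N × M →ₗ[K] N × M :=
    { toFun := fun p => (⟨p.2 - σ (N.mkQ p.2), hmemH p.2⟩, 0)
      map_add' := by
        intro p q
        refine Prod.ext (Subtype.ext ?_) ?_ <;> simp [map_add] <;> abel
      map_smul' := by
        intro k p
        refine Prod.ext (Subtype.ext ?_) ?_ <;>
          simp [LinearMap.map_smul_of_tower, smul_sub] } with hHdef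
  have hF1 : ∀ b, ((F b).1 : M) = D (σ b) - σ (Dq b) := fun _ => rfl
  have hF2 : ∀ b, (F b).2 = σ b := fun _ => rfl
  have hH1 : ∀ p : N × M, ((H p).1 : M) = p.2 - σ (N.mkQ p.2) := fun _ => rfl
  have hH2 : ∀ p : N × M, (H p).2 = 0 := fun _ => rfl
  have hDqDq : ∀ b : M ⧸ N, Dq (Dq b) = 0 := by
    intro b
    obtain ⟨z, rfl⟩ := N.mkQ_surjective b
    rw [hDq, hDq, hLie.dgmod.d_sq, map_zero]
  have hDqsmul : ∀ (i : ℤ), ∀ a ∈ 𝒜 i, ∀ b : M ⧸ N,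
      Dq (a • b) = dA a • b + sgn i • (a • Dq b) := by
    intro i a ha b
    obtain ⟨z, rfl⟩ := N.mkQ_surjective b
    have h : a • N.mkQ z = N.mkQ (a • z) := (map_smul N.mkQ a z).symm
    rw [h, hDq, hLie.dgmod.leibniz i a ha z, map_add, map_smul, map_zsmul,
      map_smul, hDq]
  set dC : N × M →ₗ[K] N × M :=
    ((-D') ∘ₗ LinearMap.fst K N M).prod
      ((D ∘ₗ LinearMap.snd K N M) - ((N.subtype.restrictScalars K) ∘ₗ LinearMap.fst K N M))
    with hdCdef
  have hdC1 : ∀ p : N × M, ((dC p).1 : M) = -(D (p.1 : M)) := by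
    intro p
    show ((-(D' p.1) : N) : M) = _
    rw [show ((-(D' p.1) : N) : M) = -((D' p.1 : N) : M) from rfl, hD']
  have hdC2 : ∀ p : N × M, (dC p).2 = D p.2 - (p.1 : M) := fun _ => rfl
  have hmk2 : ∀ p : N × M, N.mkQ ((dC p).2) = Dq (N.mkQ p.2) := by
    intro p
    rw [hdC2, map_sub, hker p.1, sub_zero, ← hDq]
  refine ⟨F, H, hF1, hF2, hH1, hH2, ?_, hmk2, ?_, ?_, ?_, ?_, ?_, ?_, ?_⟩
  · -- dC ∘ F = F ∘ Dq
    intro b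
    refine Prod.ext (Subtype.ext ?_) ?_
    · rw [hdC1, hF1, hF1, hDqDq, map_zero, sub_zero, map_sub, hLie.dgmod.d_sq]
      abel
    · rw [hdC2, hF2, hF1, hF2]
      abel
  · -- g ∘ f = id
    intro b
    rw [hF2, hσ]
  · -- homotopy identity
    intro p
    refine Prod.ext (Subtype.ext ?_) ?_
    · simp only [Prod.fst_add, Prod.fst_sub, Submodule.coe_add, AddSubgroupClass.coe_sub]
      rw [hdC1, hH1, hH1, hmk2 p, hdC2, hF1, map_sub]
      abel
    · simp only [Prod.snd_add, Prod.snd_sub]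
      rw [hdC2, hH2, hH1, hH2, hF2, map_zero, add_zero]
      abel
  · -- H ∘ H = 0
    intro p
    refine Prod.ext (Subtype.ext ?_) ?_
    · simp [hH1, hH2]
    · simp [hH2]
  · intro p; rw [hH2, map_zero]
  · -- H ∘ F = 0
    intro b
    refine Prod.ext (Subtype.ext ?_) ?_
    · simp [hH1, hF2, hσ]
    · simp [hH2]
  · -- F is A-linear up to sign
    intro i a ha b
    refine Prod.ext (Subtype.ext ?_) ?_
    · have hc : (((sgn i • (a • (F b).1), a • (F b).2) : N × M).1 : M)
          = sgn i • (a • ((F b).1 : M)) := rfl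
      rw [hc, hF1, hF1, map_smul σ, hLie.dgmod.leibniz i a ha, hDqsmul i a ha b,
        map_add, map_smul, map_zsmul, map_smul, smul_sub, smul_sub]
      abel
    · show (F (a • b)).2 = a • (F b).2
      rw [hF2, hF2, map_smul]
  · -- H is A-linear up to sign
    intro i a ha p
    refine Prod.ext (Subtype.ext ?_) ?_
    · have hc : ((sgn i • ((sgn i • (a • (H p).1), a • (H p).2) : N × M)).1 : M)
          = sgn i • (sgn i • (a • ((H p).1 : M))) := rfl
      have hc2 : (((sgn i • (a • p.1), a • p.2) : N × M).2) = a • p.2 := rfl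
      rw [hc, smul_smul, sgn_sq, one_smul, hH1, hH1]
      show a • p.2 - σ (N.mkQ (a • p.2)) = a • (p.2 - σ (N.mkQ p.2))
      rw [map_smul, map_smul, smul_sub]
    · show (H _).2 = (sgn i • ((sgn i • (a • (H p).1), a • (H p).2) : N × M)).2
      rw [hH2]
      show (0 : M) = sgn i • (a • (H p).2)
      rw [hH2, smul_zero, smul_zero]

end

end Paper
end

section
/- Let (L, d_L, q_2, q_3, ...) be an L∞[1] R-algebra with corresponding codifferential D_Q = d̃_L + Q on S_R(L). Then the higher derived brackets of the splitting σ(x) = x ⊙ − recover the original structure: for all n ≥ 1 and x_1, …, x_n ∈ L, ev_{1_R}([⋯[[d̃_L + Q, σ(x_1)], σ(x_2)], ⋯, σ(x_n)]) = q_n(x_1, …, x_n). -/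
open scoped Classical TensorProduct

namespace Paper

noncomputable section
section Coalg

variable (K : Type) [Field K] (A : Type) [CommRing A] [Algebra K A]
variable (L : Type) [AddCommGroup L] [Module K L] [Module A L]
variable (SL : Type) [AddCommGroup SL] [Module K SL] [Module A SL]

/-- An (axiomatized) model of the symmetric `R`-coalgebra `S_R(L)` on the graded
`A`-module `L`: `w n x = x₁ ⊙ ⋯ ⊙ xₙ` are the words, `one = 1_R`, `proj` is the
projection onto the cogenerators `L`, and `grade` is the total grading. -/
structure SymCoalg (𝒜 : ℤ → Submodule K A) (ℒ : ℤ → Submodule K L) where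
  w : ∀ n : ℕ, MultilinearMap K (fun _ : Fin n => L) SL
  one : SL
  proj : SL →ₗ[A] L
  grade : ℤ → Submodule K SL
  one_def : one = w 0 (fun k => k.elim0)
  span_words : Submodule.span A {u : SL | ∃ n x, u = w n x} = ⊤
  proj_one : proj one = 0
  proj_w1 : ∀ y : L, proj (w 1 (fun _ => y)) = y
  proj_w : ∀ (n : ℕ) (x : Fin n → L), n ≠ 1 → proj (w n x) = 0
  w_grade : ∀ (n : ℕ) (deg : Fin n → ℤ) (x : Fin n → L), (∀ k, x k ∈ ℒ (deg k)) →
    w n x ∈ grade (∑ k, deg k)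
  smul_grade : ∀ (i j : ℤ) (a : A) (u : SL), a ∈ 𝒜 i → u ∈ grade j → a • u ∈ grade (i + j)
  w_symm : ∀ (n : ℕ) (deg : Fin n → ℤ) (x : Fin n → L), (∀ k, x k ∈ ℒ (deg k)) →
    ∀ σ : Equiv.Perm (Fin n), w n (x ∘ σ) = koszulSign deg σ • w n x
  w_smul : ∀ (n : ℕ) (hn : 0 < n) (a : A) (x : Fin n → L),
    w n (Function.update x ⟨0, hn⟩ (a • x ⟨0, hn⟩)) = a • w n x

/-- The value on the word `x₁ ⊙ ⋯ ⊙ xₙ` of the coderivation of `S_R(L)` with Taylor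
coefficients `q = (q₀, q₁, q₂, …)`:
`Σᵢ Σ_{σ ∈ Sh(i,n-i)} ± qᵢ(x_{σ(1)},…,x_{σ(i)}) ⊙ x_{σ(i+1)} ⊙ ⋯ ⊙ x_{σ(n)}`. -/
def coeffSum {𝒜 : ℤ → Submodule K A} {ℒ : ℤ → Submodule K L}
    (S : SymCoalg K A L SL 𝒜 ℒ)
    (q : ∀ k, MultilinearMap K (fun _ : Fin k => L) L)
    (n : ℕ) (deg : Fin n → ℤ) (x : Fin n → L) : SL :=
  ∑ i : Fin (n + 1),
    ∑ σ ∈ Finset.univ.filter (fun σ : Equiv.Perm (Fin n) => IsUnshuffle n i.1 σ),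
      koszulSign deg σ •
        S.w (n - i.1 + 1)
          (Fin.cons (q i.1 (fun k => x (σ (Fin.castLE (Nat.lt_succ_iff.mp i.isLt) k))))
            (fun k => x (σ ⟨i.1 + k.1, by
              have h1 := i.isLt
              have h2 := k.isLt
              omega⟩)))

/-- `Q` is the (`A`-linear) coderivation of `S_R(L)` with Taylor coefficients `q`. -/
def HasCoeffs {𝒜 : ℤ → Submodule K A} {ℒ : ℤ → Submodule K L}
    (S : SymCoalg K A L SL 𝒜 ℒ) (Q : SL →ₗ[K] SL)
    (q : ∀ k, MultilinearMap K (fun _ : Fin k => L) L) : Prop :=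
  ∀ (n : ℕ) (deg : Fin n → ℤ) (x : Fin n → L), (∀ k, x k ∈ ℒ (deg k)) →
    Q (S.w n x) = coeffSum K A L SL S q n deg x

/-- `Q` is graded `A`-linear of degree `dq` (with Koszul signs). -/
def GradedLinear {𝒜 : ℤ → Submodule K A} {ℒ : ℤ → Submodule K L}
    (S : SymCoalg K A L SL 𝒜 ℒ) (dq : ℤ) (Q : SL →ₗ[K] SL) : Prop :=
  (∀ (i : ℤ), ∀ a ∈ 𝒜 i, ∀ u : SL, Q (a • u) = sgn (i * dq) • (a • Q u)) ∧
  (∀ (j : ℤ), ∀ u ∈ S.grade j, Q u ∈ S.grade (j + dq))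

/-- The value on a word of the coderivation `d̃_L` induced by a unary operator `δ`:
`Σ_k ± x₁ ⊙ ⋯ ⊙ δ(x_k) ⊙ ⋯ ⊙ xₙ`. -/
def dtilSum {𝒜 : ℤ → Submodule K A} {ℒ : ℤ → Submodule K L}
    (S : SymCoalg K A L SL 𝒜 ℒ) (δ : L →ₗ[K] L)
    (n : ℕ) (deg : Fin n → ℤ) (x : Fin n → L) : SL :=
  ∑ k : Fin n,
    sgn (∑ j ∈ Finset.univ.filter (fun j : Fin n => j < k), deg j) •
      S.w n (Function.update x k (δ (x k)))

/-- `D = d̃_δ + Q_q` : `D` acts on scalars by the Leibniz rule through `dA` and on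
words as the coderivation determined by the unary operator `δ` together with the
`A`-multilinear Taylor coefficients `q`. -/
def HasCoeffsD {𝒜 : ℤ → Submodule K A} {ℒ : ℤ → Submodule K L}
    (S : SymCoalg K A L SL 𝒜 ℒ) (dA : A →ₗ[K] A) (δ : L →ₗ[K] L)
    (q : ∀ k, MultilinearMap K (fun _ : Fin k => L) L) (D : SL →ₗ[K] SL) : Prop :=
  (∀ (i : ℤ), ∀ a ∈ 𝒜 i, ∀ u : SL, D (a • u) = dA a • u + sgn i • (a • D u)) ∧
  (∀ (n : ℕ) (deg : Fin n → ℤ) (x : Fin n → L), (∀ k, x k ∈ ℒ (deg k)) →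
    D (S.w n x) = dtilSum K A L SL S δ n deg x + coeffSum K A L SL S q n deg x)

end Coalg

/-! Expanding `[⋯[[D, σ(x₁)], σ(x₂)], ⋯, σ(xₙ)]`, every term other than `D ∘ σ(x₁) ∘ ⋯ ∘ σ(xₙ)`
applies some `σ(x_k)` after `D`. Since `D` sends words into words of length `≥ 1` and `σ(x_k)`
raises length by one, these terms send `1_R` into words of length `≥ 2`, which the projection onto
`L` kills. The surviving term is the projection of `D(x₁ ⊙ ⋯ ⊙ xₙ)`, whose only length-one
component is `q_n(x₁, …, xₙ)` (for `n = 1`, the one coming from `d̃_L`). -/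

section IteratedCommutator

variable {R V : Type*} [Ring R] [AddCommGroup V] [Module R V]

lemma list_prod_mapsTo {H : Set V} (l : List (V →ₗ[R] V))
    (hl : ∀ f ∈ l, Set.MapsTo f H H) : Set.MapsTo l.prod H H :=
  List.prod_induction (fun f : V →ₗ[R] V => Set.MapsTo f H H)
    (fun _ _ hf hg => hf.comp hg) (Set.mapsTo_id H) hl

theorem iterCommutator_apply_sub_mem (W₁ W₂ : AddSubgroup V) (hW : W₂ ≤ W₁) (H : Set V)
    (D : V →ₗ[R] V) (hD : ∀ u ∈ H, D u ∈ W₁) {n : ℕ} (σ : Fin n → V →ₗ[R] V)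
    (hσH : ∀ k, Set.MapsTo (σ k) H H) (hσW : ∀ k, ∀ v ∈ W₁, σ k v ∈ W₂) (c : Fin n → ℤ)
    (B : Fin (n + 1) → V →ₗ[R] V) (hB0 : B 0 = D)
    (hB : ∀ k : Fin n, B k.succ = B k.castSucc ∘ₗ σ k - c k • (σ k ∘ₗ B k.castSucc)) :
    ∀ u ∈ H, B (Fin.last n) u - D ((List.ofFn σ).prod u) ∈ W₂ := by
  induction n with
  | zero =>
    intro u _
    rw [show Fin.last 0 = 0 from rfl, hB0, List.ofFn_zero, List.prod_nil, Module.End.one_apply,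
      sub_self]
    exact W₂.zero_mem
  | succ n ih =>
    intro u hu
    have ih' := ih (fun k : Fin n => σ k.castSucc) (fun _ => hσH _) (fun _ => hσW _)
      (fun k : Fin n => c k.castSucc) (fun k : Fin (n + 1) => B k.castSucc) hB0
      (fun k : Fin n => by rw [← Fin.succ_castSucc]; exact hB k.castSucc)
    set P := (List.ofFn fun k : Fin n => σ k.castSucc).prod
    have hP : Set.MapsTo P H H :=
      list_prod_mapsTo _ (List.forall_mem_ofFn_iff.mpr fun k => hσH k.castSucc)
    have hBu : B (Fin.last n).castSucc u ∈ W₁ := by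
      simpa using W₁.add_mem (hW (ih' u hu)) (hD _ (hP hu))
    have hsplit : B (Fin.last (n + 1)) u - D ((List.ofFn σ).prod u) =
        (B (Fin.last n).castSucc (σ (Fin.last n) u) - D (P (σ (Fin.last n) u)))
          - c (Fin.last n) • σ (Fin.last n) (B (Fin.last n).castSucc u) := by
      rw [← Fin.succ_last, hB, List.ofFn_succ', List.prod_concat]
      simp only [LinearMap.sub_apply, LinearMap.comp_apply, LinearMap.smul_apply,
        Module.End.mul_apply, P]
      abel
    rw [hsplit]
    exact W₂.sub_mem (ih' _ (hσH _ hu)) (W₂.zsmul_mem (hσW _ _ hBu) _)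

end IteratedCommutator

lemma IsUnshuffle.eq_one {n : ℕ} {σ : Equiv.Perm (Fin n)} (h : IsUnshuffle n n σ) : σ = 1 :=
  Equiv.ext (congrFun (StrictMono.eq_id fun a b hab => h a b hab (Or.inl b.isLt)))

section Words

variable {K : Type} [Field K] {A : Type} [CommRing A] [Algebra K A]
variable {L : Type} [AddCommGroup L] [Module K L] [Module A L]
variable {SL : Type} [AddCommGroup SL] [Module K SL] [Module A SL]
variable {𝒜 : ℤ → Submodule K A} {ℒ : ℤ → Submodule K L} (S : SymCoalg K A L SL 𝒜 ℒ)

def SymCoalg.wordsFrom (m : ℕ) : AddSubgroup SL :=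
  AddSubgroup.closure {u | ∃ j, m ≤ j ∧ ∃ y : Fin j → L, S.w j y = u}

def SymCoalg.homogeneousWords : Set SL :=
  {u | ∃ (j : ℕ) (deg : Fin j → ℤ) (y : Fin j → L), (∀ k, y k ∈ ℒ (deg k)) ∧ S.w j y = u}

namespace SymCoalg

variable {S}

lemma w_mem_wordsFrom {m j : ℕ} (h : m ≤ j) (y : Fin j → L) : S.w j y ∈ S.wordsFrom m :=
  AddSubgroup.subset_closure ⟨j, h, y, rfl⟩

lemma wordsFrom_anti : Antitone S.wordsFrom := fun _ _ hm =>
  AddSubgroup.closure_mono fun _ ⟨j, hj, y, hy⟩ => ⟨j, hm.trans hj, y, hy⟩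

lemma map_mem_wordsFrom_succ (f : SL →ₗ[K] SL) (x : L)
    (hf : ∀ j (y : Fin j → L), f (S.w j y) = S.w (j + 1) (Fin.cons x y))
    {m : ℕ} {v : SL} (hv : v ∈ S.wordsFrom m) : f v ∈ S.wordsFrom (m + 1) := by
  refine (AddSubgroup.closure_le (K := (S.wordsFrom (m + 1)).comap f.toAddMonoidHom)).mpr ?_ hv
  rintro _ ⟨j, hj, y, rfl⟩
  simpa [hf] using w_mem_wordsFrom (Nat.succ_le_succ hj) _

lemma proj_eq_zero_of_mem_wordsFrom_two {v : SL} (hv : v ∈ S.wordsFrom 2) : S.proj v = 0 := by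
  refine (AddSubgroup.closure_le (K := (LinearMap.ker S.proj).toAddSubgroup)).mpr ?_ hv
  rintro _ ⟨j, hj, y, rfl⟩
  exact S.proj_w j y (by omega)

lemma one_mem_homogeneousWords : S.one ∈ S.homogeneousWords :=
  ⟨0, Fin.elim0, Fin.elim0, Fin.rec0, S.one_def.symm⟩

lemma mapsTo_homogeneousWords (f : SL →ₗ[K] SL) {x : L} {d : ℤ} (hx : x ∈ ℒ d)
    (hf : ∀ j (y : Fin j → L), f (S.w j y) = S.w (j + 1) (Fin.cons x y)) :
    Set.MapsTo f S.homogeneousWords S.homogeneousWords := by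
  rintro _ ⟨j, deg, y, hy, rfl⟩
  exact ⟨j + 1, Fin.cons d deg, Fin.cons x y, Fin.cases hx hy, (hf j y).symm⟩

lemma ofFn_prod_apply_one {n : ℕ} (x : Fin n → L) (f : Fin n → SL →ₗ[K] SL)
    (hf : ∀ k j (y : Fin j → L), f k (S.w j y) = S.w (j + 1) (Fin.cons (x k) y)) :
    (List.ofFn f).prod S.one = S.w n x := by
  induction n with
  | zero => simp [S.one_def, Subsingleton.elim x Fin.elim0]
  | succ n ih =>
    rw [List.ofFn_succ, List.prod_cons, Module.End.mul_apply,
      ih (Fin.tail x) _ fun k => hf k.succ, hf, Fin.cons_self_tail]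

lemma dtilSum_mem_wordsFrom_one (δ : L →ₗ[K] L) (n : ℕ) (deg : Fin n → ℤ) (y : Fin n → L) :
    dtilSum K A L SL S δ n deg y ∈ S.wordsFrom 1 :=
  AddSubgroup.sum_mem _ fun k _ => AddSubgroup.zsmul_mem _ (w_mem_wordsFrom k.pos _) _

lemma coeffSum_mem_wordsFrom_one (q : ∀ k, MultilinearMap K (fun _ : Fin k => L) L)
    (n : ℕ) (deg : Fin n → ℤ) (y : Fin n → L) :
    coeffSum K A L SL S q n deg y ∈ S.wordsFrom 1 :=
  AddSubgroup.sum_mem _ fun _ _ => AddSubgroup.sum_mem _ fun _ _ =>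
    AddSubgroup.zsmul_mem _ (w_mem_wordsFrom (by omega) _) _

lemma proj_w_cons {m : ℕ} (hm : m = 0) (a : L) (y : Fin m → L) :
    S.proj (S.w (m + 1) (Fin.cons a y)) = a := by
  subst hm
  rw [show (Fin.cons a y : Fin 1 → L) = fun _ => a from funext (Fin.cases rfl fun i => i.elim0)]
  exact S.proj_w1 a

lemma proj_dtilSum_of_ne_one (δ : L →ₗ[K] L) {n : ℕ} (hn : n ≠ 1) (deg : Fin n → ℤ)
    (y : Fin n → L) : S.proj (dtilSum K A L SL S δ n deg y) = 0 := by
  simp [dtilSum, S.proj_w _ _ hn]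

lemma proj_dtilSum_one (δ : L →ₗ[K] L) (deg : Fin 1 → ℤ) (y : Fin 1 → L) :
    S.proj (dtilSum K A L SL S δ 1 deg y) = δ (y 0) := by
  have hy : Function.update y 0 (δ (y 0)) = fun _ => δ (y 0) :=
    funext fun t => by rw [Subsingleton.elim t 0, Function.update_self]
  simp [dtilSum, hy, S.proj_w1, sgn]

/- Only the summand `i = n` is a word of length one, and its unshuffle is the identity. -/
lemma proj_coeffSum (q : ∀ k, MultilinearMap K (fun _ : Fin k => L) L)
    (n : ℕ) (deg : Fin n → ℤ) (y : Fin n → L) :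
    S.proj (coeffSum K A L SL S q n deg y) = q n y := by
  have hid : Finset.univ.filter (fun σ : Equiv.Perm (Fin n) => IsUnshuffle n n σ) = {1} := by
    ext σ
    simp only [Finset.mem_filter, Finset.mem_univ, true_and, Finset.mem_singleton]
    exact ⟨IsUnshuffle.eq_one, fun h a b hab _ => by simpa [h] using hab⟩
  rw [coeffSum, map_sum, Finset.sum_eq_single_of_mem (Fin.last n) (Finset.mem_univ _)]
  · simp only [Fin.val_last, hid, Finset.sum_singleton, koszulSign_one, one_smul]
    rw [proj_w_cons (Nat.sub_self n)]
    rfl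
  · intro i _ hi
    have hin : i.1 < n := Fin.val_lt_last hi
    simp [S.proj_w _ _ (show n - i.1 + 1 ≠ 1 by omega)]

lemma proj_apply_w_of_hasCoeffsD {dA : A →ₗ[K] A} {δ : L →ₗ[K] L}
    {q : ∀ k, MultilinearMap K (fun _ : Fin k => L) L} (hδ : ∀ y, q 1 (fun _ => y) = δ y)
    {D : SL →ₗ[K] SL} (hD : HasCoeffsD K A L SL S dA δ (fun n => if n = 1 then 0 else q n) D)
    {n : ℕ} {deg : Fin n → ℤ} {x : Fin n → L} (hx : ∀ k, x k ∈ ℒ (deg k)) :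
    S.proj (D (S.w n x)) = q n x := by
  rw [hD.2 n deg x hx, map_add, proj_coeffSum]
  by_cases hn : n = 1
  · subst hn
    rw [proj_dtilSum_one, if_pos rfl, ← hδ,
      show (fun _ => x 0) = x from funext fun t => by rw [Subsingleton.elim t 0]]
    simp
  · rw [proj_dtilSum_of_ne_one δ hn, if_neg hn, zero_add]

lemma mem_wordsFrom_one_of_hasCoeffsD {dA : A →ₗ[K] A} {δ : L →ₗ[K] L}
    {q : ∀ k, MultilinearMap K (fun _ : Fin k => L) L} {D : SL →ₗ[K] SL}
    (hD : HasCoeffsD K A L SL S dA δ q D) {u : SL} (hu : u ∈ S.homogeneousWords) :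
    D u ∈ S.wordsFrom 1 := by
  obtain ⟨j, deg, y, hy, rfl⟩ := hu
  rw [hD.2 j deg y hy]
  exact add_mem (dtilSum_mem_wordsFrom_one δ j deg y) (coeffSum_mem_wordsFrom_one q j deg y)

end SymCoalg

end Words

theorem statement_13_general
    (K : Type) [Field K] (A : Type) [CommRing A] [Algebra K A]
    (L : Type) [AddCommGroup L] [Module K L] [Module A L]
    (SL : Type) [AddCommGroup SL] [Module K SL] [Module A SL]
    (𝒜 : ℤ → Submodule K A) (dA : A →ₗ[K] A)
    (ℒ : ℤ → Submodule K L) (dL : L →ₗ[K] L)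
    (q : ∀ k, MultilinearMap K (fun _ : Fin k => L) L)
    (h : IsLInftyAlg K A L 𝒜 dA ℒ dL q)
    (S : SymCoalg K A L SL 𝒜 ℒ)
    (Dtot : SL →ₗ[K] SL)
    (hD : HasCoeffsD K A L SL S dA dL (fun n => if n = 1 then 0 else q n) Dtot)
    (Sσ : L → (SL →ₗ[K] SL))
    (hSσ : ∀ (x : L) (n : ℕ) (y : Fin n → L),
      Sσ x (S.w n y) = S.w (n + 1) (Fin.cons x y)) :
    ∀ (n : ℕ) (deg : Fin n → ℤ) (x : Fin n → L), 1 ≤ n → (∀ k, x k ∈ ℒ (deg k)) →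
      ∀ B : Fin (n + 1) → (SL →ₗ[K] SL),
        B 0 = Dtot →
        (∀ k : Fin n,
          B k.succ = B k.castSucc ∘ₗ Sσ (x k)
            - sgn ((1 + ∑ j ∈ Finset.univ.filter (fun j : Fin n => j < k), deg j)
                * deg k) • (Sσ (x k) ∘ₗ B k.castSucc)) →
        S.proj (B (Fin.last n) S.one) = q n x := by
  intro n deg x _ hx B hB0 hB
  have key := iterCommutator_apply_sub_mem (S.wordsFrom 1) (S.wordsFrom 2)
    (S.wordsFrom_anti (by norm_num)) S.homogeneousWords Dtot
    (fun _ => SymCoalg.mem_wordsFrom_one_of_hasCoeffsD hD) (fun k => Sσ (x k))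
    (fun k => SymCoalg.mapsTo_homogeneousWords _ (hx k) (hSσ (x k)))
    (fun k _ => SymCoalg.map_mem_wordsFrom_succ _ (x k) (hSσ (x k))) _ B hB0 hB
    S.one SymCoalg.one_mem_homogeneousWords
  rw [SymCoalg.ofFn_prod_apply_one x _ fun k => hSσ (x k)] at key
  have hproj := SymCoalg.proj_eq_zero_of_mem_wordsFrom_two key
  rw [map_sub, sub_eq_zero] at hproj
  rw [hproj]
  exact SymCoalg.proj_apply_w_of_hasCoeffsD h.q_one hD hx

/-- For an `L∞[1]` `R`-algebra `(L, d_L, q₂, …)` with codifferential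
`D_Q = d̃_L + Q` on `S_R(L)`, the higher derived brackets of the splitting
`σ(x) = x ⊙ −` recover the original brackets:
`ev_{1_R}([⋯[[D_Q, σ(x₁)], σ(x₂)],⋯, σ(xₙ)]) = q_n(x₁, …, xₙ)`. -/
theorem statement_13
    (K : Type) [Field K] (A : Type) [CommRing A] [Algebra K A]
    (L : Type) [AddCommGroup L] [Module K L] [Module A L]
    (SL : Type) [AddCommGroup SL] [Module K SL] [Module A SL]
    (𝒜 : ℤ → Submodule K A) (dA : A →ₗ[K] A)
    (ℒ : ℤ → Submodule K L) (dL : L →ₗ[K] L)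
    (q : ∀ k, MultilinearMap K (fun _ : Fin k => L) L)
    (h : IsLInftyAlg K A L 𝒜 dA ℒ dL q)
    (S : SymCoalg K A L SL 𝒜 ℒ)
    (Dtot : SL →ₗ[K] SL)
    (hD : HasCoeffsD K A L SL S dA dL (fun n => if n = 1 then 0 else q n) Dtot)
    (Sσ : L → (SL →ₗ[K] SL))
    (hSσ : ∀ (x : L) (n : ℕ) (y : Fin n → L),
      Sσ x (S.w n y) = S.w (n + 1) (Fin.cons x y))
    (hSσone : ∀ x : L, Sσ x S.one = S.w 1 (fun _ => x)) :
    ∀ (n : ℕ) (deg : Fin n → ℤ) (x : Fin n → L), 1 ≤ n → (∀ k, x k ∈ ℒ (deg k)) →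
      ∀ B : Fin (n + 1) → (SL →ₗ[K] SL),
        B 0 = Dtot →
        (∀ k : Fin n,
          B k.succ = B k.castSucc ∘ₗ Sσ (x k)
            - sgn ((1 + ∑ j ∈ Finset.univ.filter (fun j : Fin n => j < k), deg j)
                * deg k) • (Sσ (x k) ∘ₗ B k.castSucc)) →
        S.proj (B (Fin.last n) S.one) = q n x :=
  statement_13_general K A L SL 𝒜 dA ℒ dL q h S Dtot hD Sσ hSσ

end

end Paper
end
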